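/- arXiv:1708.04864 — 2 statements merged into one kernel-verified Lean document; each statement's English description precedes it below -/
import Mathlib

section
/- Let Σ be a finite alphabet, let I ⊆ Σ* be an ideal with ε ∉ I, and let u ∈ I. Then ι(u) (the shortest suffix of u belonging to I) has exactly one prefix belonging to 𝓜(I), and this prefix equals the last factor λ(u), i.e. the middle term m of the unique factorization u = u'·m·v with m ∈ 𝓜(I) and m.drop 1 ++ v containing no factor in I. -/
/-- The action of a word on a state: `actW δ q w` is `q · w`. -/
def actW {A Q : Type*} (δ : Q → A → Q) (q : Q) (w : List A) : Q := w.foldl δ q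

/-- The set of reset (synchronizing) words of the automaton `(Q, δ)`. -/
def SynSet {A Q : Type*} (δ : Q → A → Q) : Set (List A) :=
  {w | ∃ q : Q, ∀ p : Q, actW δ p w = q}

/-- `I` is a two-sided ideal of `Σ*`. -/
def IsIdealLang {A : Type*} (I : Set (List A)) : Prop :=
  ∀ x u y : List A, u ∈ I → x ++ u ++ y ∈ I

/-- The set of minimal words of an ideal: `𝓜(I) = I \ (Σ⁺I ∪ IΣ⁺)`. -/
def MinWords {A : Type*} (I : Set (List A)) : Set (List A) :=
  I \ ({w | ∃ x u : List A, x ≠ [] ∧ u ∈ I ∧ w = x ++ u} ∪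
       {w | ∃ u x : List A, u ∈ I ∧ x ≠ [] ∧ w = u ++ x})

/-- `τ(u)`: the longest suffix of `u` not belonging to `I`
(the suffix of `u` of length `k` is `u.drop (u.length - k)`). -/
noncomputable def tailW {A : Type*} (I : Set (List A)) (u : List A) : List A :=
  u.drop (u.length - sSup {k | k ≤ u.length ∧ u.drop (u.length - k) ∉ I})

/-- `ι(u)`: the suffix of `u` of length `|τ(u)| + 1`,
i.e. the shortest suffix of `u` belonging to `I`. -/
noncomputable def iotaW {A : Type*} (I : Set (List A)) (u : List A) : List A :=
  u.drop (u.length - ((tailW I u).length + 1))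

/-!
Every suffix of `u` lying in `I` has `ι(u)` as a suffix, so no proper suffix of `ι(u)` lies in
`I`. A minimal infix `m` of `ι(u)` must then start at position 0, since otherwise the suffix of
`ι(u)` starting at `m` would be a proper suffix in the ideal. Minimal words are prefix-free, which
gives uniqueness. Finally, for a factorization `u = u'·m·v` as in the statement, `ι(u)` is a suffix
of `m·v`; if it were a proper one it would be an infix of `m.drop 1 ++ v` lying in `I`.
-/

section

variable {A : Type*} {I : Set (List A)}

theorem IsIdealLang.mem_of_infix (hI : IsIdealLang I) {w w' : List A} (h : w <:+: w')
    (hw : w ∈ I) : w' ∈ I := by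
  obtain ⟨x, y, rfl⟩ := h
  exact hI x w y hw

theorem eq_of_prefix_of_mem_minWords {p q : List A} (hpq : p <+: q) (hp : p ∈ I)
    (hq : q ∈ MinWords I) : p = q := by
  obtain ⟨x, rfl⟩ := hpq
  by_contra hne
  exact hq.2 (Or.inr ⟨p, x, hp, fun hx => hne (by simp [hx]), rfl⟩)

theorem exists_infix_mem_minWords {w : List A} (hw : w ∈ I) :
    ∃ m, m <:+: w ∧ m ∈ MinWords I := by
  induction hn : w.length using Nat.strong_induction_on generalizing w with
  | _ n ih =>
  by_cases hmin : w ∈ MinWords I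
  · exact ⟨w, List.infix_refl w, hmin⟩
  have hshorter : ∃ v, v <:+: w ∧ v.length < w.length ∧ v ∈ I := by
    have hsplit : w ∈ {w | ∃ x u : List A, x ≠ [] ∧ u ∈ I ∧ w = x ++ u} ∪
        {w | ∃ u x : List A, u ∈ I ∧ x ≠ [] ∧ w = u ++ x} := by
      by_contra h
      exact hmin ⟨hw, h⟩
    rcases hsplit with ⟨x, v, hx, hv, rfl⟩ | ⟨v, x, hv, hx, rfl⟩
    · exact ⟨v, (List.suffix_append x v).isInfix, by simp [List.length_pos_iff.mpr hx], hv⟩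
    · exact ⟨v, (List.prefix_append v x).isInfix, by simp [List.length_pos_iff.mpr hx], hv⟩
  obtain ⟨v, hvw, hlt, hv⟩ := hshorter
  obtain ⟨m, hmv, hm⟩ := ih _ (hn ▸ hlt) hv rfl
  exact ⟨m, hmv.trans hvw, hm⟩

theorem existsUnique_prefix_mem_minWords (hI : IsIdealLang I) {w : List A} (hw : w ∈ I)
    (hsuf : ∀ y, y <:+ w → y ∈ I → y = w) : ∃! p, p <+: w ∧ p ∈ MinWords I := by
  obtain ⟨m, ⟨a, b, rfl⟩, hm⟩ := exists_infix_mem_minWords hw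
  have hmb : m ++ b ∈ I := hI.mem_of_infix (List.prefix_append m b).isInfix hm.1
  obtain rfl : a = [] := by
    simpa using hsuf (m ++ b) ⟨a, (List.append_assoc a m b).symm⟩ hmb
  have hmw : m <+: [] ++ m ++ b := List.prefix_append m b
  refine ⟨m, ⟨hmw, hm⟩, fun p ⟨hp, hpm⟩ => ?_⟩
  rcases List.prefix_or_prefix_of_prefix hp hmw with h | h
  · exact eq_of_prefix_of_mem_minWords h hpm.1 hm
  · exact (eq_of_prefix_of_mem_minWords h hm.1 hpm).symm

section Suffixes

variable {u : List A}

theorem tailW_suffix : tailW I u <:+ u := List.drop_suffix _ _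

theorem iotaW_suffix : iotaW I u <:+ u := List.drop_suffix _ _

theorem tailW_not_mem (hε : ([] : List A) ∉ I) : tailW I u ∉ I := by
  have hne : {k | k ≤ u.length ∧ u.drop (u.length - k) ∉ I}.Nonempty :=
    ⟨0, Nat.zero_le _, by simpa using hε⟩
  exact (Nat.sSup_mem hne ⟨u.length, fun k hk => hk.1⟩).2

theorem length_le_length_tailW {w : List A} (hw : w <:+ u) (hwI : w ∉ I) :
    w.length ≤ (tailW I u).length := by
  have hk : w.length ∈ {k | k ≤ u.length ∧ u.drop (u.length - k) ∉ I} :=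
    ⟨hw.length_le, by rwa [← List.suffix_iff_eq_drop.mp hw]⟩
  have hle := le_csSup ⟨u.length, fun k hk => hk.1⟩ hk
  have hwu := hw.length_le
  simp only [tailW, List.length_drop]
  omega

theorem length_tailW_lt (hε : ([] : List A) ∉ I) (hu : u ∈ I) :
    (tailW I u).length < u.length :=
  lt_of_le_of_ne tailW_suffix.length_le fun h =>
    tailW_not_mem hε (tailW_suffix.eq_of_length h ▸ hu)

theorem length_iotaW (hε : ([] : List A) ∉ I) (hu : u ∈ I) :
    (iotaW I u).length = (tailW I u).length + 1 := by
  have := length_tailW_lt hε hu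
  simp only [iotaW, List.length_drop]
  omega

theorem iotaW_mem (hε : ([] : List A) ∉ I) (hu : u ∈ I) : iotaW I u ∈ I := by
  by_contra h
  have := length_le_length_tailW iotaW_suffix h
  rw [length_iotaW hε hu] at this
  omega

theorem iotaW_suffix_of_mem (hI : IsIdealLang I) (hε : ([] : List A) ∉ I) {w : List A}
    (hw : w <:+ u) (hwI : w ∈ I) : iotaW I u <:+ w := by
  refine List.suffix_of_suffix_length_le iotaW_suffix hw ?_
  rw [length_iotaW hε (hI.mem_of_infix hw.isInfix hwI)]
  by_contra hlt
  have hwτ : w <:+ tailW I u := List.suffix_of_suffix_length_le hw tailW_suffix (by omega)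
  exact tailW_not_mem hε (hI.mem_of_infix hwτ.isInfix hwI)

theorem eq_iotaW_of_suffix_of_mem (hI : IsIdealLang I) (hε : ([] : List A) ∉ I) {y : List A}
    (hy : y <:+ iotaW I u) (hyI : y ∈ I) : y = iotaW I u :=
  hy.eq_of_length_le (iotaW_suffix_of_mem hI hε (hy.trans iotaW_suffix) hyI).length_le

theorem prefix_iotaW_of_append (hI : IsIdealLang I) (hε : ([] : List A) ∉ I)
    {u' m v : List A} (hm : m ∈ MinWords I) (hlast : ∀ w, w <:+: m.drop 1 ++ v → w ∉ I) :
    m <+: iotaW I (u' ++ m ++ v) := by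
  have hmv : m ++ v ∈ I := hI.mem_of_infix (List.prefix_append m v).isInfix hm.1
  have hι : iotaW I (u' ++ m ++ v) <:+ m ++ v :=
    iotaW_suffix_of_mem hI hε ⟨u', (List.append_assoc u' m v).symm⟩ hmv
  obtain ⟨b, m', rfl⟩ := List.exists_cons_of_ne_nil (ne_of_mem_of_not_mem hm.1 hε)
  rcases List.suffix_cons_iff.mp hι with h | h
  · rw [h]
    exact List.prefix_append _ _
  · exact absurd (iotaW_mem hε (hI.mem_of_infix (List.infix_append u' _ v) hm.1))
      (hlast _ h.isInfix)

end Suffixes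

end

theorem stmt5_general {A : Type*}
    (I : Set (List A)) (hI : IsIdealLang I) (hε : ([] : List A) ∉ I)
    (u : List A) (hu : u ∈ I) :
    (∃! p : List A, p <+: iotaW I u ∧ p ∈ MinWords I) ∧
    ∀ u' mw v : List A, u = u' ++ mw ++ v → mw ∈ MinWords I →
      (∀ w : List A, w <:+: (mw.drop 1 ++ v) → w ∉ I) → mw <+: iotaW I u := by
  refine ⟨existsUnique_prefix_mem_minWords hI (iotaW_mem hε hu)
    fun y hy hyI => eq_iotaW_of_suffix_of_mem hI hε hy hyI, ?_⟩
  rintro u' mw v rfl hmw hlast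
  exact prefix_iotaW_of_append hI hε hmw hlast

/-- for `u ∈ I`, the word `ι(u)` (the shortest suffix of `u` in `I`) has
exactly one prefix belonging to `𝓜(I)`, and this prefix equals the last factor
`λ(u)`, i.e. the middle term of any factorization `u = u'·m·v` with `m ∈ 𝓜(I)` and
`m.drop 1 ++ v` containing no factor in `I`. -/
theorem stmt5 {A : Type*} [Fintype A]
    (I : Set (List A)) (hI : IsIdealLang I) (hε : ([] : List A) ∉ I)
    (u : List A) (hu : u ∈ I) :
    (∃! p : List A, p <+: iotaW I u ∧ p ∈ MinWords I) ∧
    ∀ u' mw v : List A, u = u' ++ mw ++ v → mw ∈ MinWords I →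
      (∀ w : List A, w <:+: (mw.drop 1 ++ v) → w ∉ I) → mw <+: iotaW I u :=
  stmt5_general I hI hε u hu
end

section
/- Let Σ be a finite alphabet and let 𝒜 = (Q, δ) be a strongly connected synchronizing automaton over Σ (Q nonempty, possibly infinite). For each q ∈ Q let I_q = {u ∈ Σ* : p·u = q for all p ∈ Q}. Then the family {I_q : q ∈ Q, I_q ≠ ∅} consists of pairwise disjoint nonempty left ideals, every I_q (q ∈ Q) is nonempty, and this family is a reset left decomposition of the ideal Syn(𝒜). -/
/-- `L` is a left ideal: `Σ*·L ⊆ L`. -/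
def IsLeftIdeal {A : Type*} (L : Set (List A)) : Prop :=
  ∀ x w : List A, w ∈ L → x ++ w ∈ L

/-- A reset left decomposition of an ideal `I`: a collection of pairwise disjoint
nonempty left ideals whose union is `I`, such that (i) for every letter `a` and
every member `J` there is a member `J'` with `J·a ⊆ J'`, and (ii) for every word
`u`, if `I·u ⊆ J` for some member `J` then `u ∈ I`. -/
def IsResetLeftDecomp {A : Type*} (I : Set (List A)) (F : Set (Set (List A))) : Prop :=
  (∀ J ∈ F, J.Nonempty) ∧
  (∀ J ∈ F, IsLeftIdeal J) ∧
  (F.PairwiseDisjoint id) ∧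
  (⋃₀ F = I) ∧
  (∀ a : A, ∀ J ∈ F, ∃ J' ∈ F, ∀ w ∈ J, w ++ [a] ∈ J') ∧
  (∀ u : List A, (∃ J ∈ F, ∀ v ∈ I, v ++ u ∈ J) → u ∈ I)

/-!
Every reset word `v` sends all states to one state `q`, so `Syn(𝒜)` is the disjoint union of the
classes `I_q`, and `I_q · u ⊆ I_{q·u}`. Composing a reset word with a path from its target to `q`
shows that every `I_q` is nonempty; hence if `Syn(𝒜) · u ⊆ I_q`, then for each state `p` a reset
word `v` onto `p` gives `p · u = q`, so `u` is itself a reset word.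
-/

section ResetClasses

variable {A Q : Type*} (δ : Q → A → Q)

def resetWordsTo (q : Q) : Set (List A) := {u | ∀ p : Q, actW δ p u = q}

def resetClasses : Set (Set (List A)) :=
  {J | (∃ q : Q, J = resetWordsTo δ q) ∧ J.Nonempty}

variable {δ}

theorem actW_append (p : Q) (x y : List A) : actW δ p (x ++ y) = actW δ (actW δ p x) y :=
  List.foldl_append

theorem append_mem_resetWordsTo {q : Q} {w : List A} (hw : w ∈ resetWordsTo δ q) (v : List A) :
    w ++ v ∈ resetWordsTo δ (actW δ q v) := fun p => by
  rw [actW_append, hw p]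

theorem isLeftIdeal_resetWordsTo (q : Q) : IsLeftIdeal (resetWordsTo δ q) := fun x w hw p => by
  rw [actW_append]
  exact hw _

theorem disjoint_resetWordsTo [Nonempty Q] {q q' : Q} (h : q ≠ q') :
    Disjoint (resetWordsTo δ q) (resetWordsTo δ q') :=
  let ⟨p⟩ := ‹Nonempty Q›
  Set.disjoint_left.2 fun _ hu hu' => h ((hu p).symm.trans (hu' p))

theorem synSet_eq_iUnion_resetWordsTo : SynSet δ = ⋃ q : Q, resetWordsTo δ q := by
  ext u
  rw [Set.mem_iUnion]
  rfl

theorem resetWordsTo_nonempty (hsc : ∀ p q : Q, ∃ w : List A, actW δ p w = q)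
    (hsync : (SynSet δ).Nonempty) (q : Q) : (resetWordsTo δ q).Nonempty := by
  obtain ⟨w, q₀, hw⟩ := hsync
  obtain ⟨v, hv⟩ := hsc q₀ q
  exact ⟨w ++ v, hv ▸ append_mem_resetWordsTo hw v⟩

theorem sUnion_resetClasses : ⋃₀ resetClasses δ = SynSet δ := by
  ext u
  rw [synSet_eq_iUnion_resetWordsTo, Set.mem_iUnion]
  constructor
  · rintro ⟨J, ⟨⟨q, rfl⟩, -⟩, hu⟩
    exact ⟨q, hu⟩
  · rintro ⟨q, hu⟩
    exact ⟨_, ⟨⟨q, rfl⟩, u, hu⟩, hu⟩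

theorem mem_synSet_of_synSet_append_subset (hne : ∀ q : Q, (resetWordsTo δ q).Nonempty)
    {u : List A} {q : Q} (hu : ∀ v ∈ SynSet δ, v ++ u ∈ resetWordsTo δ q) : u ∈ SynSet δ := by
  refine ⟨q, fun p => ?_⟩
  obtain ⟨v, hv⟩ := hne p
  have hvu := hu v (synSet_eq_iUnion_resetWordsTo ▸ Set.mem_iUnion_of_mem p hv) p
  rwa [actW_append, hv p] at hvu

theorem isResetLeftDecomp_resetClasses [Nonempty Q]
    (hne : ∀ q : Q, (resetWordsTo δ q).Nonempty) :
    IsResetLeftDecomp (SynSet δ) (resetClasses δ) := by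
  refine ⟨fun J hJ => hJ.2, ?_, ?_, sUnion_resetClasses, ?_, ?_⟩
  · rintro J ⟨⟨q, rfl⟩, -⟩
    exact isLeftIdeal_resetWordsTo q
  · rintro J ⟨⟨q, rfl⟩, -⟩ J' ⟨⟨q', rfl⟩, -⟩ hJJ'
    exact disjoint_resetWordsTo fun hqq' => hJJ' (hqq' ▸ rfl)
  · rintro a J ⟨⟨q, rfl⟩, -⟩
    exact ⟨_, ⟨⟨δ q a, rfl⟩, hne _⟩, fun w hw => append_mem_resetWordsTo hw [a]⟩
  · rintro u ⟨J, ⟨⟨q, rfl⟩, -⟩, hu⟩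
    exact mem_synSet_of_synSet_append_subset hne hu

end ResetClasses

theorem stmt12_general {A Q : Type*} [Nonempty Q]
    (δ : Q → A → Q)
    (hsc : ∀ p q : Q, ∃ w : List A, actW δ p w = q)
    (hsync : (SynSet δ).Nonempty) :
    (∀ q : Q, {u : List A | ∀ p : Q, actW δ p u = q}.Nonempty) ∧
    IsResetLeftDecomp (SynSet δ)
      {J | (∃ q : Q, J = {u : List A | ∀ p : Q, actW δ p u = q}) ∧ J.Nonempty} :=
  have hne := resetWordsTo_nonempty hsc hsync
  ⟨hne, isResetLeftDecomp_resetClasses hne⟩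

/-- for a strongly connected synchronizing automaton (with a possibly
infinite state set), each `I_q = {u : p·u = q for all p}` is nonempty, and the family
of the nonempty `I_q`'s is a reset left decomposition of `Syn(𝒜)`. -/
theorem stmt12 {A Q : Type*} [Fintype A] [Nonempty Q]
    (δ : Q → A → Q)
    (hsc : ∀ p q : Q, ∃ w : List A, actW δ p w = q)
    (hsync : (SynSet δ).Nonempty) :
    (∀ q : Q, {u : List A | ∀ p : Q, actW δ p u = q}.Nonempty) ∧
    IsResetLeftDecomp (SynSet δ)
      {J | (∃ q : Q, J = {u : List A | ∀ p : Q, actW δ p u = q}) ∧ J.Nonempty} :=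
  stmt12_general δ hsc hsync
end
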